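/- arXiv:1805.00559 — 2 statements merged into one kernel-verified Lean document; each statement's English description precedes it below -/
import Mathlib

section
/- For fixed p ∈ (0, 1/2), the function j ↦ I_p(j, j), where I is the regularized incomplete beta function, is strictly decreasing in the real variable j > 0. -/
open MeasureTheory intervalIntegral Set Real

noncomputable def incBeta (x a b : ℝ) : ℝ :=
  ∫ t in (0:ℝ)..x, t ^ (a - 1) * (1 - t) ^ (b - 1)

noncomputable def regIncBeta (x a b : ℝ) : ℝ := incBeta x a b / incBeta 1 a b

private lemma aux_half (j : ℝ) (hj : 0 < j) :
    IntervalIntegrable (fun t : ℝ => t ^ (j-1) * (1-t) ^ (j-1)) volume 0 (1/2) := by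
  apply IntervalIntegrable.mul_continuousOn
  · exact intervalIntegral.intervalIntegrable_rpow' (by linarith)
  · apply ContinuousOn.rpow_const
    · exact (continuous_const.sub continuous_id).continuousOn
    · intro x hx
      rw [Set.uIcc_of_le (by norm_num : (0:ℝ) ≤ 1/2)] at hx
      left
      have := hx.2
      intro h
      simp only [sub_eq_zero] at h
      norm_num [← h] at this

private lemma aux_ii (j : ℝ) (hj : 0 < j) {a b : ℝ} (ha : a ∈ Set.Icc (0:ℝ) 1)
    (hb : b ∈ Set.Icc (0:ℝ) 1) :
    IntervalIntegrable (fun t : ℝ => t ^ (j-1) * (1-t) ^ (j-1)) volume a b := by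
  have h1 : IntervalIntegrable (fun t : ℝ => t ^ (j-1) * (1-t) ^ (j-1)) volume 0 1 := by
    refine (aux_half j hj).trans ?_
    have := ((aux_half j hj).comp_sub_left 1).symm
    norm_num at this
    have heq : (fun x : ℝ => (1-x) ^ (j-1) * x ^ (j-1))
        = fun t : ℝ => t ^ (j-1) * (1-t) ^ (j-1) := by
      funext x; ring
    rwa [heq] at this
  refine h1.mono_set ?_
  rw [Set.uIcc_of_le (by norm_num : (0:ℝ) ≤ 1)]
  exact Set.uIcc_subset_Icc ha hb

private lemma aux_pos (j : ℝ) (hj : 0 < j) {a b : ℝ} (h0 : 0 ≤ a) (hab : a < b) (hb : b ≤ 1) :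
    0 < ∫ t in a..b, t ^ (j-1) * (1-t) ^ (j-1) := by
  refine intervalIntegral_pos_of_pos_on
    (aux_ii j hj ⟨h0, by linarith⟩ ⟨by linarith, hb⟩) (fun x hx => ?_) hab
  have hx0 : 0 < x := lt_of_le_of_lt h0 hx.1
  have hx1 : 0 < 1 - x := by have := hx.2; simp only [sub_pos]; linarith
  exact mul_pos (Real.rpow_pos_of_pos hx0 _) (Real.rpow_pos_of_pos hx1 _)

private lemma aux_symm (j p : ℝ) (_hp0 : 0 ≤ p) (_hp1 : p ≤ 1) :
    (∫ t in (1-p)..1, t ^ (j-1) * (1-t) ^ (j-1)) = ∫ t in (0:ℝ)..p, t ^ (j-1) * (1-t) ^ (j-1) := by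
  have := intervalIntegral.integral_comp_sub_left (a := 0) (b := p)
    (fun t : ℝ => t ^ (j-1) * (1-t) ^ (j-1)) 1
  simp only [sub_zero] at this
  rw [← this]
  apply intervalIntegral.integral_congr
  intro x _
  simp [mul_comm]

/-- For fixed p ∈ (0,1/2), j ↦ I_p(j,j) is strictly decreasing on (0,∞). -/
theorem regIncBeta_strictAnti (p : ℝ) (hp0 : 0 < p) (hp : p < 1/2) :
    StrictAntiOn (fun j : ℝ => regIncBeta p j j) (Set.Ioi 0) := by
  intro j1 hj1 j2 hj2 hlt
  simp only [Set.mem_Ioi] at hj1 hj2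
  set d : ℝ := j2 - j1 with hd
  have hdpos : 0 < d := by simp [hd]; linarith
  set c : ℝ := (p * (1 - p)) ^ d with hc
  have hpq : p < 1 - p := by linarith
  have hp1 : p ≤ 1 := by linarith
  have hq0 : (0:ℝ) ≤ 1 - p := by linarith
  have hq1 : 1 - p ≤ 1 := by linarith
  have hcpos : 0 < c := Real.rpow_pos_of_pos (by nlinarith) d
  -- factorization
  have hfact : ∀ t : ℝ, 0 < t → t < 1 →
      t ^ (j2-1) * (1-t) ^ (j2-1) = (t ^ (j1-1) * (1-t) ^ (j1-1)) * (t * (1-t)) ^ d := by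
    intro t ht0 ht1
    have h1t : (0:ℝ) < 1 - t := by linarith
    rw [Real.mul_rpow ht0.le h1t.le]
    rw [show j2 - 1 = (j1 - 1) + d by rw [hd]; ring]
    rw [Real.rpow_add ht0, Real.rpow_add h1t]
    ring
  -- abbreviations
  set X1 : ℝ := ∫ t in (0:ℝ)..p, t ^ (j1-1) * (1-t) ^ (j1-1) with hX1
  set X2 : ℝ := ∫ t in (0:ℝ)..p, t ^ (j2-1) * (1-t) ^ (j2-1) with hX2
  set M1 : ℝ := ∫ t in p..(1-p), t ^ (j1-1) * (1-t) ^ (j1-1) with hM1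
  set M2 : ℝ := ∫ t in p..(1-p), t ^ (j2-1) * (1-t) ^ (j2-1) with hM2
  have hX1pos : 0 < X1 := aux_pos j1 hj1 le_rfl hp0 hp1
  have hX2pos : 0 < X2 := aux_pos j2 hj2 le_rfl hp0 hp1
  have hM1pos : 0 < M1 := aux_pos j1 hj1 hp0.le hpq hq1
  have hM2pos : 0 < M2 := aux_pos j2 hj2 hp0.le hpq hq1
  have hii1X : IntervalIntegrable (fun t : ℝ => t ^ (j1-1) * (1-t) ^ (j1-1)) volume 0 p :=
    aux_ii j1 hj1 ⟨le_rfl, by norm_num⟩ ⟨hp0.le, hp1⟩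
  have hii2X : IntervalIntegrable (fun t : ℝ => t ^ (j2-1) * (1-t) ^ (j2-1)) volume 0 p :=
    aux_ii j2 hj2 ⟨le_rfl, by norm_num⟩ ⟨hp0.le, hp1⟩
  have hii1M : IntervalIntegrable (fun t : ℝ => t ^ (j1-1) * (1-t) ^ (j1-1)) volume p (1-p) :=
    aux_ii j1 hj1 ⟨hp0.le, hp1⟩ ⟨hq0, hq1⟩
  have hii2M : IntervalIntegrable (fun t : ℝ => t ^ (j2-1) * (1-t) ^ (j2-1)) volume p (1-p) :=
    aux_ii j2 hj2 ⟨hp0.le, hp1⟩ ⟨hq0, hq1⟩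
  -- X2 ≤ c * X1
  have hXle : X2 ≤ c * X1 := by
    have hmono : (fun t : ℝ => t ^ (j2-1) * (1-t) ^ (j2-1))
        ≤ᵐ[volume.restrict (Set.Icc 0 p)] fun t => c * (t ^ (j1-1) * (1-t) ^ (j1-1)) := by
      have hne : ∀ᵐ t : ℝ ∂(volume.restrict (Set.Icc 0 p)), t ≠ 0 := by
        refine ae_restrict_of_ae ?_
        rw [MeasureTheory.ae_iff]
        simp only [ne_eq, not_not, Set.setOf_eq_eq_singleton]
        exact Real.volume_singleton
      filter_upwards [hne, ae_restrict_mem measurableSet_Icc] with t ht htm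
      have ht0 : 0 < t := lt_of_le_of_ne htm.1 (Ne.symm ht)
      have ht1 : t < 1 := lt_of_le_of_lt htm.2 (by linarith)
      rw [hfact t ht0 ht1]
      have hgle : (t * (1-t)) ^ d ≤ c := by
        apply Real.rpow_le_rpow (by nlinarith) _ hdpos.le
        nlinarith [htm.2]
      have hf1 : (0:ℝ) ≤ t ^ (j1-1) * (1-t) ^ (j1-1) :=
        mul_nonneg (Real.rpow_nonneg ht0.le _) (Real.rpow_nonneg (by linarith) _)
      calc (t ^ (j1-1) * (1-t) ^ (j1-1)) * (t * (1-t)) ^ d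
          ≤ (t ^ (j1-1) * (1-t) ^ (j1-1)) * c := by
            exact mul_le_mul_of_nonneg_left hgle hf1
        _ = c * (t ^ (j1-1) * (1-t) ^ (j1-1)) := by ring
    have := intervalIntegral.integral_mono_ae_restrict hp0.le hii2X (hii1X.const_mul c) hmono
    rwa [intervalIntegral.integral_const_mul] at this
  -- c * M1 < M2
  have hMlt : c * M1 < M2 := by
    have hpos : 0 < ∫ t in p..(1-p),
        (t ^ (j2-1) * (1-t) ^ (j2-1) - c * (t ^ (j1-1) * (1-t) ^ (j1-1))) := by
      refine intervalIntegral_pos_of_pos_on (hii2M.sub (hii1M.const_mul c)) (fun x hx => ?_) hpq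
      have hx0 : 0 < x := lt_of_le_of_lt hp0.le hx.1
      have hx1 : x < 1 := by have := hx.2; linarith
      rw [hfact x hx0 hx1]
      have hgt : c < (x * (1-x)) ^ d := by
        apply Real.rpow_lt_rpow (by nlinarith) _ hdpos
        nlinarith [hx.1, hx.2]
      have hf1 : (0:ℝ) < x ^ (j1-1) * (1-x) ^ (j1-1) :=
        mul_pos (Real.rpow_pos_of_pos hx0 _) (Real.rpow_pos_of_pos (by linarith) _)
      nlinarith
    rw [intervalIntegral.integral_sub hii2M (hii1M.const_mul c),
        intervalIntegral.integral_const_mul] at hpos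
    linarith
  -- decomposition of the full integral
  have hdecomp : ∀ j : ℝ, 0 < j → incBeta 1 j j =
      (∫ t in (0:ℝ)..p, t ^ (j-1) * (1-t) ^ (j-1))
      + (∫ t in p..(1-p), t ^ (j-1) * (1-t) ^ (j-1))
      + (∫ t in (0:ℝ)..p, t ^ (j-1) * (1-t) ^ (j-1)) := by
    intro j hj
    have h1 : IntervalIntegrable (fun t : ℝ => t ^ (j-1) * (1-t) ^ (j-1)) volume 0 p :=
      aux_ii j hj ⟨le_rfl, by norm_num⟩ ⟨hp0.le, hp1⟩
    have h2 : IntervalIntegrable (fun t : ℝ => t ^ (j-1) * (1-t) ^ (j-1)) volume p (1-p) :=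
      aux_ii j hj ⟨hp0.le, hp1⟩ ⟨hq0, hq1⟩
    have h3 : IntervalIntegrable (fun t : ℝ => t ^ (j-1) * (1-t) ^ (j-1)) volume (1-p) 1 :=
      aux_ii j hj ⟨hq0, hq1⟩ ⟨by norm_num, le_rfl⟩
    have e1 := intervalIntegral.integral_add_adjacent_intervals h1 h2
    have e2 := intervalIntegral.integral_add_adjacent_intervals (h1.trans h2) h3
    rw [incBeta, ← e2, ← e1, aux_symm j p hp0.le hp1]
  have hD1 : incBeta 1 j1 j1 = X1 + M1 + X1 := hdecomp j1 hj1
  have hD2 : incBeta 1 j2 j2 = X2 + M2 + X2 := hdecomp j2 hj2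
  show regIncBeta p j2 j2 < regIncBeta p j1 j1
  rw [regIncBeta, regIncBeta, hD1, hD2]
  have hden1 : 0 < X1 + M1 + X1 := by linarith
  have hden2 : 0 < X2 + M2 + X2 := by linarith
  have hXX : incBeta p j1 j1 = X1 := rfl
  have hXX2 : incBeta p j2 j2 = X2 := rfl
  rw [hXX, hXX2, div_lt_div_iff₀ hden2 hden1]
  nlinarith [mul_le_mul_of_nonneg_right hXle hM1pos.le,
    mul_lt_mul_of_pos_right hMlt hX1pos]
end

section
/- Let f_e(k) = P(Binomial(2k+1, p_e) ≥ k+1) for p_e ∈ (0, 1/2). Then the successive improvements diminish: for integers k₁ > k₂ ≥ 0, |f_e(k₁+1) - f_e(k₁)| ≤ |f_e(k₂+1) - f_e(k₂)|. -/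
/-!
Adding two voters changes the majority outcome only when the first `2k+1` votes are within one
of a tie; this gives `f(k+1) - f(k) = (p - 1/2) · C(2k+2, k+1) · (p(1-p))^(k+1)`. The central
binomial coefficient at most quadruples from one `k` to the next while `p(1-p) ≤ 1/4`, so the
absolute differences decrease.
-/

noncomputable def fe (p : ℝ) (k : ℕ) : ℝ :=
  ∑ i ∈ Finset.Icc (k+1) (2*k+1),
    (Nat.choose (2*k+1) i : ℝ) * p ^ i * (1 - p) ^ (2*k+1-i)

open Finset Nat

theorem Finset.sum_Icc_add_one {M : Type*} [AddCommMonoid M] (g : ℕ → M) (m n : ℕ) :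
    ∑ i ∈ Icc (m+1) (n+1), g i = ∑ i ∈ Icc m n, g (i+1) := by
  rw [← map_add_right_Icc, sum_map]
  rfl

theorem Nat.antitone_centralBinom_mul_pow {x : ℝ} (hx0 : 0 ≤ x) (hx : x ≤ 1/4) :
    Antitone fun n => (centralBinom n : ℝ) * x ^ n := by
  refine antitone_nat_of_succ_le fun n => ?_
  have hratio : (centralBinom (n+1) : ℝ) ≤ 4 * centralBinom n := by
    refine mod_cast Nat.le_of_mul_le_mul_left ?_ n.succ_pos
    rw [succ_mul_centralBinom_succ]
    nlinarith
  calc (centralBinom (n+1) : ℝ) * x ^ (n+1) = centralBinom (n+1) * x * x ^ n := by ring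
    _ ≤ 4 * centralBinom n * (1/4) * x ^ n := by gcongr
    _ = centralBinom n * x ^ n := by ring

/-- `P(Bin(n, p) = i)`; the truncated `n - i` is harmless because `n.choose i = 0` for `i > n`. -/
noncomputable def binomTerm (p : ℝ) (n i : ℕ) : ℝ :=
  n.choose i * p ^ i * (1 - p) ^ (n - i)

noncomputable def binomTail (p : ℝ) (n m : ℕ) : ℝ :=
  ∑ i ∈ Icc m n, binomTerm p n i

theorem fe_eq_binomTail (p : ℝ) (k : ℕ) : fe p k = binomTail p (2*k+1) (k+1) := rfl

theorem binomTerm_of_lt {n i : ℕ} (p : ℝ) (h : n < i) : binomTerm p n i = 0 := by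
  simp [binomTerm, choose_eq_zero_of_lt h]

theorem binomTerm_succ_succ (p : ℝ) (n i : ℕ) :
    binomTerm p (n+1) (i+1) = p * binomTerm p n i + (1-p) * binomTerm p n (i+1) := by
  simp only [binomTerm, choose_succ_succ', Nat.add_sub_add_right, cast_add]
  rcases lt_or_ge i n with h | h
  · rw [show n - i = n - (i+1) + 1 by omega]
    ring
  · simp only [choose_eq_zero_of_lt (show n < i+1 by omega), CharP.cast_eq_zero, add_zero,
      zero_mul, mul_zero]
    ring

theorem binomTail_eq_binomTerm_add {n m : ℕ} (p : ℝ) (h : m ≤ n) :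
    binomTail p n m = binomTerm p n m + binomTail p n (m+1) := by
  rw [binomTail, binomTail, Icc_add_one_left_eq_Ioc, add_sum_Ioc_eq_sum_Icc h]

theorem binomTail_succ_succ {n m : ℕ} (p : ℝ) (h : m ≤ n) :
    binomTail p (n+1) (m+1) = binomTail p n (m+1) + p * binomTerm p n m := by
  have hshift : ∑ i ∈ Icc m n, binomTerm p n (i+1) = binomTail p n (m+1) := by
    rw [← sum_Icc_add_one (binomTerm p n), binomTail]
    refine (sum_subset (Icc_subset_Icc_right n.le_succ) fun i hi hi' => ?_).symm
    exact binomTerm_of_lt p (by simp only [mem_Icc] at hi hi'; omega)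
  have hpascal : binomTail p (n+1) (m+1) = p * binomTail p n m + (1-p) * binomTail p n (m+1) := by
    simp only [binomTail, sum_Icc_add_one, binomTerm_succ_succ, sum_add_distrib, ← mul_sum, hshift]
  rw [hpascal, binomTail_eq_binomTerm_add p h]
  ring

theorem fe_succ_sub_fe (p : ℝ) (k : ℕ) :
    fe p (k+1) - fe p k = (p - 1/2) * (centralBinom (k+1) * (p * (1-p)) ^ (k+1)) := by
  have hchoose : ((2*k+2).choose (k+1) : ℝ) = 2 * (2*k+1).choose (k+1) := by
    rw [choose_succ_succ', ← choose_symm_half]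
    push_cast
    ring
  rw [fe_eq_binomTail, fe_eq_binomTail, show 2*(k+1)+1 = 2*k+2+1 by ring,
    binomTail_succ_succ p (by omega), binomTail_succ_succ p (by omega),
    binomTail_eq_binomTerm_add p (show k+1 ≤ 2*k+1 by omega)]
  simp only [binomTerm, show 2*k+2-(k+1) = k+1 by omega, show 2*k+1-(k+1) = k by omega,
    centralBinom_eq_two_mul_choose, show 2*(k+1) = 2*k+2 by ring, hchoose, mul_pow]
  ring

/-- Diminishing returns: the improvement from adding two workers decreases. -/
theorem fe_diminishing_returns (p : ℝ) (hp0 : 0 < p) (hp : p < 1/2)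
    (k₁ k₂ : ℕ) (h : k₂ < k₁) :
    |fe p (k₁+1) - fe p k₁| ≤ |fe p (k₂+1) - fe p k₂| := by
  have hx0 : 0 ≤ p * (1 - p) := by nlinarith
  have hx : p * (1 - p) ≤ 1/4 := by nlinarith [sq_nonneg (p - 1/2)]
  have hanti : (centralBinom (k₁+1) : ℝ) * (p * (1-p)) ^ (k₁+1)
      ≤ centralBinom (k₂+1) * (p * (1-p)) ^ (k₂+1) :=
    antitone_centralBinom_mul_pow hx0 hx (show k₂+1 ≤ k₁+1 by omega)
  have hnonneg : 0 ≤ (centralBinom (k₁+1) : ℝ) * (p * (1-p)) ^ (k₁+1) :=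
    mul_nonneg (cast_nonneg _) (pow_nonneg hx0 _)
  rw [fe_succ_sub_fe, fe_succ_sub_fe, abs_mul, abs_mul (p - 1/2), abs_of_nonneg hnonneg,
    abs_of_nonneg (hnonneg.trans hanti)]
  exact mul_le_mul_of_nonneg_left hanti (abs_nonneg _)
end
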